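/- Let u, v : Ω → ℝ be smooth with v₁ vanishing nowhere on Ω. If u₂·v₁ − u₁·v₂ = v₁² and u₄·v₁ − u₁·v₄ = v₁·v₃ hold identically on Ω, then ∂₃(v₂/v₁) = ∂₁(v₄/v₁) on Ω. -/

import Mathlib

/-!
With `w = v₂/v₁` and `z = v₄/v₁`, the vector fields `X = ∂₂ - w ∂₁` and `Y = ∂₄ - z ∂₁` annihilate
`v`, and the system says `X u = v₁`, `Y u = v₃`. The bracket `[X, Y] = (Y w - X z) ∂₁` annihilates
`v` as well, so it vanishes since `v₁ ≠ 0`. Applied to `u` it gives `X v₃ = Y v₁`, which expands to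
`v₁ (∂₃ w - ∂₁ z) = 0`. In the code the coordinates `x¹, …, x⁴` carry the indices `0, …, 3`.
-/

/-- Partial derivative of `F : ℝ⁴ → ℝ` in the `i`-th coordinate direction. -/
noncomputable def pd (i : Fin 4) (F : (Fin 4 → ℝ) → ℝ) : (Fin 4 → ℝ) → ℝ :=
  fun x => fderiv ℝ F x (Pi.single i 1)

open Filter Topology

noncomputable def vecField (i : Fin 4) (w F : (Fin 4 → ℝ) → ℝ) : (Fin 4 → ℝ) → ℝ :=
  fun y => pd i F y - w y * pd 0 F y

theorem vecField_apply (i : Fin 4) (w F : (Fin 4 → ℝ) → ℝ) (y : Fin 4 → ℝ) :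
    vecField i w F y = pd i F y - w y * pd 0 F y :=
  rfl

section

variable {f g w z : (Fin 4 → ℝ) → ℝ} {x : Fin 4 → ℝ}

theorem HasFDerivAt.pd_eq {f' : (Fin 4 → ℝ) →L[ℝ] ℝ} (hf : HasFDerivAt f f' x) (i : Fin 4) :
    pd i f x = f' (Pi.single i 1) := by
  rw [pd, hf.fderiv]

theorem Filter.EventuallyEq.pd_eq (h : f =ᶠ[𝓝 x] g) (i : Fin 4) : pd i f x = pd i g x := by
  rw [pd, pd, h.fderiv_eq]

theorem pd_const (c : ℝ) (i : Fin 4) : pd i (fun _ => c) x = 0 := by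
  simp [pd]

theorem pd_sub (hf : DifferentiableAt ℝ f x) (hg : DifferentiableAt ℝ g x) (i : Fin 4) :
    pd i (fun y => f y - g y) x = pd i f x - pd i g x :=
  (hf.hasFDerivAt.sub hg.hasFDerivAt).pd_eq i

theorem pd_mul (hf : DifferentiableAt ℝ f x) (hg : DifferentiableAt ℝ g x) (i : Fin 4) :
    pd i (fun y => f y * g y) x = pd i f x * g x + f x * pd i g x := by
  rw [(hf.hasFDerivAt.fun_mul hg.hasFDerivAt).pd_eq i, pd, pd]
  simp only [add_apply, smul_apply, smul_eq_mul]
  ring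

theorem pd_div (hf : DifferentiableAt ℝ f x) (hg : DifferentiableAt ℝ g x) (hgx : g x ≠ 0)
    (i : Fin 4) :
    pd i (fun y => f y / g y) x = (pd i f x * g x - f x * pd i g x) / g x ^ 2 := by
  have hinv : HasFDerivAt (fun y => (g y)⁻¹) (-(g x ^ 2)⁻¹ • fderiv ℝ g x) x :=
    (hasDerivAt_inv hgx).comp_hasFDerivAt x hg.hasFDerivAt
  simp only [div_eq_mul_inv]
  rw [(hf.hasFDerivAt.fun_mul hinv).pd_eq i, pd, pd]
  simp only [add_apply, smul_apply, smul_eq_mul, neg_mul, mul_neg]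
  field_simp
  ring

theorem ContDiffAt.differentiableAt_pd (hf : ContDiffAt ℝ 2 f x) (i : Fin 4) :
    DifferentiableAt ℝ (pd i f) x :=
  ((hf.fderiv_right (m := 1) (by norm_num)).differentiableAt one_ne_zero).clm_apply
    (differentiableAt_const _)

theorem ContDiffAt.pd_comm (hf : ContDiffAt ℝ 2 f x) (i j : Fin 4) :
    pd i (pd j f) x = pd j (pd i f) x := by
  have hsymm : IsSymmSndFDerivAt ℝ f x := hf.isSymmSndFDerivAt (by simp)
  have hd : DifferentiableAt ℝ (fderiv ℝ f) x :=
    (hf.fderiv_right (m := 1) (by norm_num)).differentiableAt one_ne_zero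
  have hsnd : ∀ k l : Fin 4,
      pd k (pd l f) x = fderiv ℝ (fderiv ℝ f) x (Pi.single k 1) (Pi.single l 1) := fun k l =>
    (hd.hasFDerivAt.clm_apply (hasFDerivAt_const (Pi.single l 1) x)).pd_eq k |>.trans (by simp)
  rw [hsnd, hsnd, hsymm]

theorem Filter.EventuallyEq.vecField_eq {F G : (Fin 4 → ℝ) → ℝ} (h : F =ᶠ[𝓝 x] G) (i : Fin 4) :
    vecField i w F x = vecField i w G x := by
  simp only [vecField_apply, h.pd_eq]

theorem pd_vecField (hf : ContDiffAt ℝ 2 f x) (hw : DifferentiableAt ℝ w x) (i k : Fin 4) :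
    pd k (vecField i w f) x = pd k (pd i f) x - (pd k w x * pd 0 f x + w x * pd k (pd 0 f) x) := by
  have hf' := hf.differentiableAt_pd
  unfold vecField
  rw [pd_sub (hf' i) (hw.fun_mul (hf' 0)), pd_mul hw (hf' 0)]

theorem vecField_commutator (hf : ContDiffAt ℝ 2 f x) (hw : DifferentiableAt ℝ w x)
    (hz : DifferentiableAt ℝ z x) (i j : Fin 4) :
    vecField i w (vecField j z f) x - vecField j z (vecField i w f) x
      = (vecField j z w x - vecField i w z x) * pd 0 f x := by
  simp only [vecField_apply]
  rw [pd_vecField hf hz, pd_vecField hf hz, pd_vecField hf hw, pd_vecField hf hw,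
    hf.pd_comm i j, hf.pd_comm i 0, hf.pd_comm j 0]
  ring

theorem vecField_bracket_mul_pd_eq {a b : (Fin 4 → ℝ) → ℝ} {i j : Fin 4}
    (hf : ContDiffAt ℝ 2 f x) (hw : DifferentiableAt ℝ w x) (hz : DifferentiableAt ℝ z x)
    (hX : vecField i w f =ᶠ[𝓝 x] a) (hY : vecField j z f =ᶠ[𝓝 x] b) :
    (vecField j z w x - vecField i w z x) * pd 0 f x = vecField i w b x - vecField j z a x := by
  rw [← vecField_commutator hf hw hz, hY.vecField_eq, hX.vecField_eq]

theorem vecField_bracket_eq_zero {i j : Fin 4} (hf : ContDiffAt ℝ 2 f x)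
    (hw : DifferentiableAt ℝ w x) (hz : DifferentiableAt ℝ z x) (hf0 : pd 0 f x ≠ 0)
    (hX : vecField i w f =ᶠ[𝓝 x] fun _ => 0) (hY : vecField j z f =ᶠ[𝓝 x] fun _ => 0) :
    vecField j z w x - vecField i w z x = 0 := by
  have h := vecField_bracket_mul_pd_eq hf hw hz hX hY
  simp only [vecField_apply, pd_const, mul_zero, sub_zero] at h
  exact (mul_eq_zero.1 h).resolve_right hf0

theorem vecField_pd_div_eventuallyEq {v F G : (Fin 4 → ℝ) → ℝ} {i : Fin 4}
    (hv0 : ∀ᶠ y in 𝓝 x, pd 0 v y ≠ 0)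
    (h : ∀ᶠ y in 𝓝 x, pd i F y * pd 0 v y - pd 0 F y * pd i v y = pd 0 v y * G y) :
    vecField i (fun y => pd i v y / pd 0 v y) F =ᶠ[𝓝 x] G := by
  filter_upwards [hv0, h] with y hy0 hy
  rw [vecField_apply]
  field_simp
  linear_combination hy

theorem vecField_pd_div_pd_eq {v : (Fin 4 → ℝ) → ℝ} (hv : ContDiffAt ℝ 2 v x)
    (hv0 : pd 0 v x ≠ 0) (i j : Fin 4) :
    vecField i (fun y => pd i v y / pd 0 v y) (pd j v) x
      = pd 0 v x * pd j (fun y => pd i v y / pd 0 v y) x := by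
  have hv' := hv.differentiableAt_pd
  rw [vecField_apply, pd_div (hv' i) (hv' 0) hv0, hv.pd_comm j i, hv.pd_comm j 0]
  field_simp

end

/-- Elimination of `u` from the Segre type [22] system `u₂v₁ − u₁v₂ = v₁²`,
`u₄v₁ − u₁v₄ = v₁v₃` yields `∂₃(v₂/v₁) = ∂₁(v₄/v₁)`.
Coordinates `x¹,…,x⁴` are indexed by `0,…,3`. -/
theorem statement4 (Ω : Set (Fin 4 → ℝ)) (hΩ : IsOpen Ω)
    (u v : (Fin 4 → ℝ) → ℝ)
    (hu : ContDiffOn ℝ (⊤ : ℕ∞) u Ω) (hv : ContDiffOn ℝ (⊤ : ℕ∞) v Ω)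
    (hv1 : ∀ x ∈ Ω, pd 0 v x ≠ 0)
    (heq1 : ∀ x ∈ Ω, pd 1 u x * pd 0 v x - pd 0 u x * pd 1 v x = (pd 0 v x) ^ 2)
    (heq2 : ∀ x ∈ Ω, pd 3 u x * pd 0 v x - pd 0 u x * pd 3 v x = pd 0 v x * pd 2 v x) :
    ∀ x ∈ Ω,
      pd 2 (fun y => pd 1 v y / pd 0 v y) x = pd 0 (fun y => pd 3 v y / pd 0 v y) x := by
  intro x hx
  have hΩx : Ω ∈ 𝓝 x := hΩ.mem_nhds hx
  have hu2 : ContDiffAt ℝ 2 u x := (hu.contDiffAt hΩx).of_le (WithTop.coe_le_coe.mpr le_top)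
  have hv2 : ContDiffAt ℝ 2 v x := (hv.contDiffAt hΩx).of_le (WithTop.coe_le_coe.mpr le_top)
  have hv0 : pd 0 v x ≠ 0 := hv1 x hx
  have hv' := hv2.differentiableAt_pd
  have hv0_nhds : ∀ᶠ y in 𝓝 x, pd 0 v y ≠ 0 := eventually_of_mem hΩx hv1
  set w := fun y => pd 1 v y / pd 0 v y
  set z := fun y => pd 3 v y / pd 0 v y
  have hw : DifferentiableAt ℝ w x := by fun_prop (disch := exact hv0)
  have hz : DifferentiableAt ℝ z x := by fun_prop (disch := exact hv0)
  have hXv : vecField 1 w v =ᶠ[𝓝 x] fun _ => 0 :=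
    vecField_pd_div_eventuallyEq hv0_nhds (.of_forall fun _ => by ring)
  have hYv : vecField 3 z v =ᶠ[𝓝 x] fun _ => 0 :=
    vecField_pd_div_eventuallyEq hv0_nhds (.of_forall fun _ => by ring)
  have hXu : vecField 1 w u =ᶠ[𝓝 x] pd 0 v :=
    vecField_pd_div_eventuallyEq hv0_nhds
      (eventually_of_mem hΩx fun y hy => (heq1 y hy).trans (sq _))
  have hYu : vecField 3 z u =ᶠ[𝓝 x] pd 2 v :=
    vecField_pd_div_eventuallyEq hv0_nhds (eventually_of_mem hΩx heq2)
  have key := vecField_bracket_mul_pd_eq hu2 hw hz hXu hYu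
  rw [vecField_bracket_eq_zero hv2 hw hz hv0 hXv hYv, zero_mul, vecField_pd_div_pd_eq hv2 hv0,
    vecField_pd_div_pd_eq hv2 hv0, ← mul_sub] at key
  exact sub_eq_zero.1 ((mul_eq_zero.1 key.symm).resolve_left hv0)
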